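/- Let p_n(x) = Σ_T x^{bor(T)}, summing over left-aligned rook placements T on 2δ_n, where bor(T) is the number of blocks of T containing exactly one rook. Then x^{n/2} · p_n((x+1)/√x) = S_{n+1}(x), where S_{n+1}(x) = Σ_{σ ∈ S_{n+1}} x^{des(σ)} is the (n+1)-st Eulerian polynomial. Equivalently, writing p_n(x) = Σ_k a_{n,k} x^{n-2k}, one has S_{n+1}(x) = Σ_k a_{n,k} x^k (x+1)^{n-2k}. -/

import Mathlib

/-- Rook placements on the double staircase `2δ_n`: one rook per row (row `i`,
numbered from the top starting at `0`, has `2*(i+1)` cells), at most one rook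
per column. -/
abbrev RookPlacement (n : ℕ) :=
  {r : Fin n → Fin (2 * n) //
    Function.Injective r ∧ ∀ i : Fin n, (r i : ℕ) < 2 * (i.val + 1)}

/-- Column `c` (0-indexed) of the rook placement `R` contains a rook. -/
def Occupied {n : ℕ} (R : RookPlacement n) (c : ℕ) : Prop :=
  ∃ j : Fin n, (R.1 j : ℕ) = c

/-- The number of rooks in block `i` of `R` (block `i` consists of the two
columns `2i` and `2i+1`, 0-indexed). -/
def blockRooks {n : ℕ} (R : RookPlacement n) (i : Fin n) : ℕ :=
  (Finset.univ.filter (fun j : Fin n => (R.1 j : ℕ) / 2 = i.val)).card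

/-- `R` is left-aligned: no block has a rook in its right column without a rook
in its left column. -/
def LeftAligned {n : ℕ} (R : RookPlacement n) : Prop :=
  ∀ i : Fin n, Occupied R (2 * i.val + 1) → Occupied R (2 * i.val)

/-- `bor R` is the number of blocks of `R` containing exactly one rook. -/
def bor {n : ℕ} (R : RookPlacement n) : ℕ :=
  (Finset.univ.filter (fun i : Fin n => blockRooks R i = 1)).card

/-- The one-line word of a permutation of `{1, …, m}` extended by the boundary
convention `σ_0 = σ_{m+1} = ⋯ = 0`: `permWord σ i = σ_i` for `1 ≤ i ≤ m`
(values in `{1, …, m}`) and `0` otherwise. -/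
def permWord {m : ℕ} (σ : Equiv.Perm (Fin m)) : ℕ → ℕ := fun i =>
  if h : 1 ≤ i ∧ i ≤ m then (σ ⟨i - 1, by omega⟩).val + 1 else 0

/-- The number of descents of `σ ∈ S_{m}`: positions `1 ≤ i ≤ m - 1` with
`σ_i > σ_{i+1}`. -/
def desCount {m : ℕ} (σ : Equiv.Perm (Fin m)) : ℕ :=
  ((Finset.Icc 1 (m - 1)).filter (fun i => permWord σ (i + 1) < permWord σ i)).card

/-- The number of ascents of `σ ∈ S_{m}`: positions `1 ≤ i ≤ m - 1` with
`σ_i < σ_{i+1}`. -/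
def ascCount {m : ℕ} (σ : Equiv.Perm (Fin m)) : ℕ :=
  ((Finset.Icc 1 (m - 1)).filter (fun i => permWord σ i < permWord σ (i + 1))).card

/-- `σ ∈ S_m` has no double falls: no position `1 ≤ i ≤ m` with
`σ_{i-1} > σ_i > σ_{i+1}` (with the convention `σ_0 = σ_{m+1} = 0`).
Equivalently, every descent of `σ` is a peak. -/
def NoDoubleFall {m : ℕ} (σ : Equiv.Perm (Fin m)) : Prop :=
  ∀ i ∈ Finset.Icc 1 m,
    ¬ (permWord σ i < permWord σ (i - 1) ∧ permWord σ (i + 1) < permWord σ i)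

/-- `σ ∈ S_m` has no double rises: no position `1 ≤ i ≤ m` with
`σ_{i-1} < σ_i < σ_{i+1}` (with the convention `σ_0 = σ_{m+1} = 0`).
Equivalently, every ascent of `σ` is a valley. -/
def NoDoubleRise {m : ℕ} (σ : Equiv.Perm (Fin m)) : Prop :=
  ∀ i ∈ Finset.Icc 1 m,
    ¬ (permWord σ (i - 1) < permWord σ i ∧ permWord σ i < permWord σ (i + 1))

attribute [local instance] Classical.propDecidable

/-!
Let `odd R` be the number of rooks of a placement `R` on `2δ_n` in odd (right) columns. A placement
on `2δ_n` with `k` odd rooks leaves `k + 1` even and `n + 1 - k` odd columns free for a new bottom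
row, while inserting the new maximum into `σ ∈ S_{n+1}` with `k` descents keeps `k` descents in
`k + 1` positions and creates one more in the remaining `n + 1 - k`. By induction, `odd` on
placements on `2δ_n` is distributed like `des` on `S_{n+1}`.

Moving the lone rook of every block with one rook to the left column of its block sends a
placement to a left-aligned one `T`. The fibre over `T` is parametrised by the set `S` of those
single blocks whose rook is moved back, and the placement in it has `d(T) + |S|` odd rooks, where
`d(T)` is the number of full blocks. Hence `S_{n+1}(u) = Σ_T u^{d(T)} (u + 1)^{bor T}`, and
`2 d(T) + bor T = n` turns this into both forms of the theorem.
-/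

open Finset Equiv

section Descents

variable {m : ℕ}

lemma permWord_le (σ : Perm (Fin m)) (i : ℕ) : permWord σ i ≤ m := by
  unfold permWord
  split
  · exact (σ _).isLt
  · omega

lemma permWord_pos (σ : Perm (Fin m)) {i : ℕ} (h₁ : 1 ≤ i) (h₂ : i ≤ m) :
    0 < permWord σ i := by
  simp [permWord, h₁, h₂]

lemma permWord_eq_zero (σ : Perm (Fin m)) {i : ℕ} (h : i = 0 ∨ m < i) :
    permWord σ i = 0 := by
  rw [permWord, dif_neg (by omega)]

/-- `i` is a descent of the word `0 σ₁ ⋯ σₘ 0`; so `0` never is and `m` always is one. -/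
def IsDescentAt (σ : Perm (Fin m)) (i : ℕ) : Prop :=
  permWord σ (i + 1) < permWord σ i

lemma desCount_add_one (σ : Perm (Fin m)) (hm : 1 ≤ m) :
    desCount σ + 1 = #{i ∈ range (m + 1) | IsDescentAt σ i} := by
  have h₀ : ¬ IsDescentAt σ 0 := by simp [IsDescentAt, permWord_eq_zero σ (Or.inl rfl)]
  have hₘ : IsDescentAt σ m := by
    rw [IsDescentAt, permWord_eq_zero σ (Or.inr (Nat.lt_succ_self m))]
    exact permWord_pos σ hm le_rfl
  have hdes : desCount σ = #{i ∈ Icc 1 (m - 1) | IsDescentAt σ i} := by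
    unfold desCount IsDescentAt
    convert rfl
  rw [hdes, ← card_insert_of_notMem (a := m) (by simp; omega)]
  congr 1
  ext i
  simp only [mem_insert, mem_filter, mem_Icc, mem_range]
  constructor
  · rintro (rfl | ⟨hi, hd⟩)
    · exact ⟨by omega, hₘ⟩
    · exact ⟨by omega, hd⟩
  · rintro ⟨hi, hd⟩
    rcases Nat.lt_or_ge i m with h | h
    · exact Or.inr ⟨⟨Nat.one_le_iff_ne_zero.mpr (by rintro rfl; exact h₀ hd), by omega⟩, hd⟩
    · exact Or.inl (by omega)

lemma card_filter_isDescentAt (σ : Perm (Fin m)) (hm : 1 ≤ m) :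
    #{p : Fin (m + 1) | IsDescentAt σ p} = desCount σ + 1 := by
  rw [desCount_add_one σ hm, card_filter, card_filter,
    Fin.sum_univ_eq_sum_range (fun i => if IsDescentAt σ i then 1 else 0)]

/-- The word of `σ` with the new maximum `m + 1` inserted at the `0`-based position `p`. -/
def insertMaxFun (σ : Perm (Fin m)) (p : Fin (m + 1)) : Fin (m + 1) → Fin (m + 1) :=
  p.insertNth (Fin.last m) (Fin.castSucc ∘ σ)

lemma insertMaxFun_eq_last {σ : Perm (Fin m)} {p q : Fin (m + 1)}
    (h : insertMaxFun σ p q = Fin.last m) : q = p := by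
  by_contra hq
  obtain ⟨k, rfl⟩ := Fin.exists_succAbove_eq hq
  rw [insertMaxFun, Fin.insertNth_apply_succAbove] at h
  exact (Fin.castSucc_lt_last (σ k)).ne h

lemma insertMaxFun_injective (σ : Perm (Fin m)) (p : Fin (m + 1)) :
    Function.Injective (insertMaxFun σ p) := by
  intro a b h
  by_cases ha : a = p
  · subst ha
    exact (insertMaxFun_eq_last (h.symm.trans (Fin.insertNth_apply_same _ _ _))).symm
  obtain ⟨k, rfl⟩ := Fin.exists_succAbove_eq ha
  by_cases hb : b = p
  · subst hb
    exact insertMaxFun_eq_last (h.trans (Fin.insertNth_apply_same _ _ _))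
  obtain ⟨l, rfl⟩ := Fin.exists_succAbove_eq hb
  simp only [insertMaxFun, Fin.insertNth_apply_succAbove, Function.comp_apply,
    Fin.castSucc_inj, EmbeddingLike.apply_eq_iff_eq] at h
  rw [h]

noncomputable def insertMax (σ : Perm (Fin m)) (p : Fin (m + 1)) : Perm (Fin (m + 1)) :=
  Equiv.ofBijective (insertMaxFun σ p)
    (Finite.injective_iff_bijective.mp (insertMaxFun_injective σ p))

lemma insertMax_bijective :
    Function.Bijective (fun x : Perm (Fin m) × Fin (m + 1) => insertMax x.1 x.2) := by
  rw [Fintype.bijective_iff_injective_and_card]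
  refine ⟨fun ⟨σ, p⟩ ⟨σ', p'⟩ h => ?_, ?_⟩
  · have hf : insertMaxFun σ p = insertMaxFun σ' p' := congrArg (⇑) h
    obtain rfl : p = p' := insertMaxFun_eq_last
      ((congrFun hf p).symm.trans (Fin.insertNth_apply_same _ _ _))
    have := (Fin.insertNth_inj.mp hf).2
    simp only [Prod.mk.injEq, and_true]
    ext k
    rw [Fin.castSucc_injective _ (congrFun this k)]
  · simp [Fintype.card_perm, Nat.factorial_succ, mul_comm]

lemma permWord_val_add_one (σ : Perm (Fin m)) (k : Fin m) : permWord σ (k + 1) = σ k + 1 := by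
  simp [permWord, Nat.succ_le_of_lt k.isLt]

lemma insertMax_apply_self (σ : Perm (Fin m)) (p : Fin (m + 1)) :
    insertMax σ p p = Fin.last m := by
  simp [insertMax, insertMaxFun]

lemma insertMax_apply_succAbove (σ : Perm (Fin m)) (p : Fin (m + 1)) (k : Fin m) :
    insertMax σ p (p.succAbove k) = (σ k).castSucc := by
  simp [insertMax, insertMaxFun]

lemma permWord_insertMax (σ : Perm (Fin m)) (p : Fin (m + 1)) (i : ℕ) :
    permWord (insertMax σ p) i =
      if i = p + 1 then m + 1 else if i ≤ p then permWord σ i else permWord σ (i - 1) := by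
  by_cases hi : 1 ≤ i ∧ i ≤ m + 1
  swap
  · rw [permWord_eq_zero _ (by omega), if_neg (by omega)]
    split_ifs <;> rw [permWord_eq_zero _ (by omega)]
  obtain ⟨j, rfl⟩ : ∃ j : Fin (m + 1), i = j + 1 := ⟨⟨i - 1, by omega⟩, by simp; omega⟩
  rw [permWord_val_add_one]
  rcases Fin.eq_self_or_eq_succAbove p j with rfl | ⟨k, rfl⟩
  · simp [insertMax_apply_self]
  · rw [insertMax_apply_succAbove, Fin.val_castSucc]
    unfold Fin.succAbove
    split_ifs with hk h₁ h₁ h₂ <;> simp_all [Fin.lt_def, permWord_val_add_one] <;> omega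

section InsertMax

variable (σ : Perm (Fin m)) (p : Fin (m + 1))

lemma isDescentAt_insertMax_of_lt {i : ℕ} (h : i < p) :
    IsDescentAt (insertMax σ p) i ↔ IsDescentAt σ i := by
  simp only [IsDescentAt, permWord_insertMax]
  rw [if_neg (by omega), if_pos (by omega), if_neg (by omega), if_pos (by omega)]

lemma not_isDescentAt_insertMax_self : ¬ IsDescentAt (insertMax σ p) p := by
  rw [IsDescentAt, permWord_insertMax, permWord_insertMax, if_pos rfl, if_neg (by omega),
    if_pos le_rfl]
  have := permWord_le σ p
  omega

lemma isDescentAt_insertMax_succ : IsDescentAt (insertMax σ p) (p + 1) := by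
  rw [IsDescentAt, permWord_insertMax, permWord_insertMax, if_pos rfl, if_neg (by omega),
    if_neg (by omega)]
  have := permWord_le σ (p + 1 + 1 - 1)
  omega

lemma isDescentAt_insertMax_of_gt {i : ℕ} (h : p < i) :
    IsDescentAt (insertMax σ p) (i + 1) ↔ IsDescentAt σ i := by
  simp only [IsDescentAt, permWord_insertMax]
  rw [if_neg (by omega), if_neg (by omega), if_neg (by omega), if_neg (by omega)]
  simp

/-- A descent at `p` is replaced by the one at `p + 1`; the others shift or stay. -/
lemma card_isDescentAt_insertMax :
    #{i ∈ range (m + 1 + 1) | IsDescentAt (insertMax σ p) i} + (if IsDescentAt σ p then 1 else 0)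
      = #{i ∈ range (m + 1) | IsDescentAt σ i} + 1 := by
  obtain ⟨k, hk⟩ : ∃ k, m = p + k := ⟨m - p, by omega⟩
  simp only [card_filter]
  rw [show range (m + 1 + 1) = range (p + (k + 1 + 1)) by congr 1; omega,
    show range (m + 1) = range (p + (k + 1)) by congr 1; omega,
    sum_range_add _ p, sum_range_add _ p, sum_range_succ' _ (k + 1), sum_range_succ' _ k,
    sum_range_succ' (fun x => if IsDescentAt σ (p + x) then 1 else 0) k]
  have below : ∑ x ∈ range p, (if IsDescentAt (insertMax σ p) x then 1 else 0)
      = ∑ x ∈ range p, (if IsDescentAt σ x then 1 else 0) :=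
    sum_congr rfl fun x hx => by rw [isDescentAt_insertMax_of_lt σ p (mem_range.mp hx)]
  have above : ∑ x ∈ range k, (if IsDescentAt (insertMax σ p) (p + (x + 1 + 1)) then 1 else 0)
      = ∑ x ∈ range k, (if IsDescentAt σ (p + (x + 1)) then 1 else 0) :=
    sum_congr rfl fun x _ => by rw [← add_assoc, isDescentAt_insertMax_of_gt σ p (by omega)]
  rw [below, above, add_zero, if_pos (isDescentAt_insertMax_succ σ p),
    if_neg (not_isDescentAt_insertMax_self σ p)]
  ring

lemma desCount_insertMax (hm : 1 ≤ m) :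
    desCount (insertMax σ p) = if IsDescentAt σ p then desCount σ else desCount σ + 1 := by
  have key := card_isDescentAt_insertMax σ p
  have h₁ := desCount_add_one (insertMax σ p) (Nat.le_add_left 1 m)
  have h₂ := desCount_add_one σ hm
  split_ifs at * <;> omega

end InsertMax

theorem sum_desCount_succ {M : Type*} [AddCommMonoid M] (hm : 1 ≤ m) (g : ℕ → M) :
    ∑ τ : Perm (Fin (m + 1)), g (desCount τ) =
      ∑ σ : Perm (Fin m),
        ((desCount σ + 1) • g (desCount σ) + (m - desCount σ) • g (desCount σ + 1)) := by
  rw [← Fintype.sum_bijective _ insertMax_bijective _ _ fun _ => rfl, Fintype.sum_prod_type]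
  refine sum_congr rfl fun σ _ => ?_
  have hnot : #{p : Fin (m + 1) | ¬ IsDescentAt σ p} = m - desCount σ := by
    have := card_filter_add_card_filter_not (s := univ) (fun p : Fin (m + 1) => IsDescentAt σ p)
    rw [card_filter_isDescentAt σ hm, card_univ, Fintype.card_fin] at this
    omega
  simp only [desCount_insertMax _ _ hm, apply_ite g]
  rw [sum_ite, sum_const, sum_const, card_filter_isDescentAt σ hm, hnot]

end Descents

lemma card_filter_mod_two_eq (N : ℕ) {b : ℕ} (hb : b < 2) :
    #{c : Fin (2 * N) | (c : ℕ) % 2 = b} = N := by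
  rw [card_filter, Fin.sum_univ_eq_sum_range (fun c => if c % 2 = b then 1 else 0)]
  induction N with
  | zero => simp
  | succ N ih =>
    rw [show 2 * (N + 1) = 2 * N + 1 + 1 by ring, sum_range_succ, sum_range_succ, ih]
    split_ifs <;> omega

namespace RookPlacement

variable {n : ℕ}

def oddRooks (R : RookPlacement n) : ℕ := #{j | (R.1 j : ℕ) % 2 = 1}

def init (R : RookPlacement (n + 1)) : RookPlacement n :=
  ⟨fun i => ⟨R.1 i.castSucc, by have := R.2.2 i.castSucc; simp at this; omega⟩,
   fun a b h => Fin.castSucc_injective n (R.2.1 (Fin.ext (by simpa using congrArg Fin.val h))),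
   fun i => by simpa using R.2.2 i.castSucc⟩

lemma init_apply (R : RookPlacement (n + 1)) (i : Fin n) :
    ((init R).1 i : ℕ) = R.1 i.castSucc := rfl

def freeColumns (R : RookPlacement n) : Finset (Fin (2 * (n + 1))) :=
  {c | ∀ j, (R.1 j : ℕ) ≠ c}

def snoc (R : RookPlacement n) (c : Fin (2 * (n + 1))) (hc : c ∈ freeColumns R) :
    RookPlacement (n + 1) :=
  ⟨Fin.snoc (α := fun _ => Fin (2 * (n + 1))) (Fin.castLE (by omega) ∘ R.1) c,
   Fin.snoc_injective_of_injective ((Fin.castLE_injective _).comp R.2.1) <| by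
     rintro ⟨j, rfl⟩
     simp [freeColumns] at hc
     exact hc j rfl,
   Fin.lastCases (by simp) fun i => by simpa using R.2.2 i⟩

lemma snoc_last (R : RookPlacement n) (c : Fin (2 * (n + 1))) (hc : c ∈ freeColumns R) :
    (snoc R c hc).1 (Fin.last n) = c := by
  simp [snoc]

lemma init_snoc (R : RookPlacement n) (c : Fin (2 * (n + 1))) (hc : c ∈ freeColumns R) :
    init (snoc R c hc) = R := by
  ext i
  simp [init_apply, snoc]

lemma last_mem_freeColumns_init (R : RookPlacement (n + 1)) :
    R.1 (Fin.last n) ∈ freeColumns (init R) := by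
  refine mem_filter.mpr ⟨mem_univ _, fun j h => ?_⟩
  exact (Fin.castSucc_lt_last j).ne (R.2.1 (Fin.ext h))

lemma snoc_init (R : RookPlacement (n + 1)) :
    snoc (init R) _ (last_mem_freeColumns_init R) = R := by
  ext i
  induction i using Fin.lastCases <;> simp [snoc, init_apply]

lemma oddRooks_eq_init_add (R : RookPlacement (n + 1)) :
    oddRooks R = oddRooks (init R) + (R.1 (Fin.last n) : ℕ) % 2 := by
  rw [oddRooks, oddRooks, card_filter, card_filter, Fin.sum_univ_castSucc]
  simp only [init_apply]
  congr 1
  split_ifs <;> omega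

lemma sum_oddRooks_succ_eq_sum_freeColumns {M : Type*} [AddCommMonoid M] (g : ℕ → M) :
    ∑ R : RookPlacement (n + 1), g (oddRooks R) =
      ∑ R : RookPlacement n, ∑ c ∈ freeColumns R, g (oddRooks R + c % 2) := by
  rw [sum_sigma']
  refine sum_bij' (fun R _ => ⟨init R, R.1 (Fin.last n)⟩)
    (fun x hx => snoc x.1 x.2 (mem_sigma.mp hx).2) (fun R _ => ?_) (fun _ _ => mem_univ _)
    (fun R _ => snoc_init R) (fun x hx => ?_) (fun R _ => by rw [oddRooks_eq_init_add])
  · exact mem_sigma.mpr ⟨mem_univ _, last_mem_freeColumns_init R⟩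
  · exact Sigma.ext (init_snoc _ _ _) (heq_of_eq (snoc_last _ _ (mem_sigma.mp hx).2))

lemma card_freeColumns_filter_add (R : RookPlacement n) {b : ℕ} (hb : b < 2) :
    #{c ∈ freeColumns R | c.val % 2 = b} + #{j | (R.1 j : ℕ) % 2 = b} = n + 1 := by
  have hsplit : ({c : Fin (2 * (n + 1)) | (c : ℕ) % 2 = b} : Finset _) =
      {c ∈ freeColumns R | c.val % 2 = b} ∪
        ({j | (R.1 j : ℕ) % 2 = b} : Finset _).image (Fin.castLE (by omega) ∘ R.1) := by
    ext c
    simp only [freeColumns, mem_filter, mem_univ, true_and, mem_union, mem_image,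
      Function.comp_apply]
    constructor
    · intro hc
      by_cases hfree : ∀ j, (R.1 j : ℕ) ≠ c
      · exact Or.inl ⟨hfree, hc⟩
      · obtain ⟨j, hj⟩ := not_forall_not.mp hfree
        exact Or.inr ⟨j, by omega, Fin.ext (by simpa using hj)⟩
    · rintro (⟨_, hc⟩ | ⟨j, hj, rfl⟩)
      · exact hc
      · simpa using hj
  have hdisj : Disjoint {c ∈ freeColumns R | c.val % 2 = b}
      (({j | (R.1 j : ℕ) % 2 = b} : Finset _).image (Fin.castLE (by omega) ∘ R.1)) := by
    simp only [disjoint_left, freeColumns, mem_filter, mem_univ, true_and, mem_image,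
      Function.comp_apply, not_exists, not_and]
    intro c hc j _ rfl
    exact hc.1 j (by simp)
  have := card_filter_mod_two_eq (n + 1) hb
  rwa [hsplit, card_union_of_disjoint hdisj,
    card_image_of_injective _ ((Fin.castLE_injective _).comp R.2.1)] at this

lemma card_freeColumns_even (R : RookPlacement n) :
    #{c ∈ freeColumns R | ¬ c.val % 2 = 1} = oddRooks R + 1 := by
  have h := card_freeColumns_filter_add R (b := 0) (by omega)
  have h' := card_filter_add_card_filter_not (s := univ) fun j : Fin n => (R.1 j : ℕ) % 2 = 1
  rw [card_univ, Fintype.card_fin] at h'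
  simp only [Nat.mod_two_ne_one] at h' ⊢
  unfold oddRooks
  omega

lemma card_freeColumns_odd (R : RookPlacement n) :
    #{c ∈ freeColumns R | c.val % 2 = 1} = n + 1 - oddRooks R := by
  have := card_freeColumns_filter_add R (b := 1) (by omega)
  unfold oddRooks
  omega

theorem sum_oddRooks_succ {M : Type*} [AddCommMonoid M] (g : ℕ → M) :
    ∑ R : RookPlacement (n + 1), g (oddRooks R) =
      ∑ R : RookPlacement n,
        ((oddRooks R + 1) • g (oddRooks R) + (n + 1 - oddRooks R) • g (oddRooks R + 1)) := by
  rw [sum_oddRooks_succ_eq_sum_freeColumns]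
  refine sum_congr rfl fun R _ => ?_
  have hparity : ∀ c : Fin (2 * (n + 1)), g (oddRooks R + c % 2) =
      if (c : ℕ) % 2 = 1 then g (oddRooks R + 1) else g (oddRooks R) := fun c => by
    split_ifs with h
    · rw [h]
    · rw [Nat.mod_two_ne_one.mp h, add_zero]
  rw [sum_congr rfl fun c _ => hparity c, sum_ite, sum_const, sum_const, card_freeColumns_odd,
    card_freeColumns_even, add_comm]

theorem sum_oddRooks_eq_sum_desCount {M : Type*} [AddCommMonoid M] (n : ℕ) (g : ℕ → M) :
    ∑ R : RookPlacement n, g (oddRooks R) = ∑ σ : Perm (Fin (n + 1)), g (desCount σ) := by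
  induction n generalizing g with
  | zero =>
    have hR : ∀ R : RookPlacement 0, oddRooks R = 0 := fun R => by simp [oddRooks]
    have hσ : ∀ σ : Perm (Fin 1), desCount σ = 0 := fun σ => by simp [desCount]
    have hcard : Fintype.card (RookPlacement 0) = 1 := Fintype.card_eq_one_iff.mpr
      ⟨⟨Fin.elim0, fun i => i.elim0, fun i => i.elim0⟩,
        fun R => Subtype.ext (funext fun i => i.elim0)⟩
    simp [hR, hσ, hcard]
  | succ n ih =>
    rw [sum_oddRooks_succ, ih fun k => (k + 1) • g k + (n + 1 - k) • g (k + 1),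
      sum_desCount_succ (Nat.le_add_left 1 n)]

def blockRows (R : RookPlacement n) (b : ℕ) : Finset (Fin n) := {j | (R.1 j : ℕ) / 2 = b}

lemma card_rowsAt (R : RookPlacement n) (c : ℕ) :
    #{j | (R.1 j : ℕ) = c} = if Occupied R c then 1 else 0 := by
  split_ifs with h
  · obtain ⟨j, hj⟩ := h
    refine card_eq_one.mpr ⟨j, eq_singleton_iff_unique_mem.mpr ⟨by simpa using hj, ?_⟩⟩
    intro k hk
    exact R.2.1 (Fin.ext ((mem_filter.mp hk).2.trans hj.symm))
  · exact card_eq_zero.mpr (filter_eq_empty_iff.mpr fun j _ hj => h ⟨j, hj⟩)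

lemma card_blockRows (R : RookPlacement n) (b : ℕ) :
    #(blockRows R b) =
      (if Occupied R (2 * b) then 1 else 0) + (if Occupied R (2 * b + 1) then 1 else 0) := by
  rw [← card_rowsAt, ← card_rowsAt, ← card_union_of_disjoint]
  · congr 1
    ext j
    simp only [blockRows, mem_filter, mem_univ, true_and, mem_union]
    omega
  · exact disjoint_filter.mpr fun j _ h => by omega

lemma eq_of_card_blockRows_eq_one {R : RookPlacement n} {b : ℕ} (h : #(blockRows R b) = 1)
    {j k : Fin n} (hj : (R.1 j : ℕ) / 2 = b) (hk : (R.1 k : ℕ) / 2 = b) : j = k :=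
  card_le_one.mp h.le j (by simpa [blockRows] using hj) k (by simpa [blockRows] using hk)

def singles (R : RookPlacement n) : Finset ℕ := {b ∈ range n | #(blockRows R b) = 1}

noncomputable def rightSingles (R : RookPlacement n) : Finset ℕ :=
  {b ∈ singles R | Occupied R (2 * b + 1)}

def doubleBlocks (R : RookPlacement n) : ℕ := #{b ∈ range n | #(blockRows R b) = 2}

lemma card_singles (R : RookPlacement n) : #(singles R) = bor R := by
  rw [singles, bor, card_filter, card_filter,
    ← Fin.sum_univ_eq_sum_range (fun b => if #(blockRows R b) = 1 then 1 else 0)]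
  rfl

lemma two_mul_doubleBlocks_add_bor (R : RookPlacement n) :
    2 * doubleBlocks R + bor R = n := by
  have hfib := card_eq_sum_card_fiberwise (s := univ) (t := range n)
    (f := fun j : Fin n => (R.1 j : ℕ) / 2) fun j _ => by
      have := (R.1 j).isLt
      simp only [coe_range, Set.mem_Iio]
      omega
  have hblock : ∀ b, #(blockRows R b) =
      2 * (if #(blockRows R b) = 2 then 1 else 0) + (if #(blockRows R b) = 1 then 1 else 0) :=
    fun b => by have := card_blockRows R b; split_ifs at * <;> omega
  rw [card_univ, Fintype.card_fin] at hfib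
  rw [← card_singles, doubleBlocks, singles, card_filter, card_filter, mul_sum, ← sum_add_distrib]
  conv_rhs => rw [hfib]
  exact sum_congr rfl fun b _ => (hblock b).symm

lemma bor_eq_sub (R : RookPlacement n) : bor R = n - 2 * doubleBlocks R := by
  have := two_mul_doubleBlocks_add_bor R
  omega

lemma card_filter_occupied_odd (R : RookPlacement n) :
    #{b ∈ range n | Occupied R (2 * b + 1)} = oddRooks R := by
  symm
  refine card_bij (fun j _ => (R.1 j : ℕ) / 2) (fun j hj => ?_) (fun j hj k hk hjk => ?_)
    (fun b hb => ?_)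
  · have := (R.1 j).isLt
    simp only [mem_filter, mem_univ, true_and, mem_range] at hj ⊢
    exact ⟨by omega, j, by omega⟩
  · simp only [mem_filter, mem_univ, true_and] at hj hk
    exact R.2.1 (Fin.ext (by omega))
  · obtain ⟨j, hj⟩ := (mem_filter.mp hb).2
    exact ⟨j, by simp only [mem_filter, mem_univ, true_and]; omega, by omega⟩

/-- An odd rook is either one of the two rooks of a full block or alone in its block. -/
lemma oddRooks_eq (R : RookPlacement n) : oddRooks R = doubleBlocks R + #(rightSingles R) := by
  rw [← card_filter_occupied_odd, ← card_filter_add_card_filter_not fun b => #(blockRows R b) ≠ 1,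
    rightSingles, singles, filter_filter, filter_filter, filter_filter, doubleBlocks]
  congr 2 <;> ext b <;> simp only [mem_filter, card_blockRows] <;> split_ifs <;> simp_all

/-- The column of row `j` after the lone rook of every single block in `S` has been moved to the
other column of its block. -/
def flipCol (R : RookPlacement n) (S : Finset ℕ) (j : Fin n) : ℕ :=
  if (R.1 j : ℕ) / 2 ∈ S ∧ #(blockRows R ((R.1 j : ℕ) / 2)) = 1 then
    2 * ((R.1 j : ℕ) / 2) + (1 - (R.1 j : ℕ) % 2)
  else R.1 j

lemma flipCol_div_two (R : RookPlacement n) (S : Finset ℕ) (j : Fin n) :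
    flipCol R S j / 2 = (R.1 j : ℕ) / 2 := by
  unfold flipCol
  split_ifs <;> omega

lemma flipCol_of_not_single {R : RookPlacement n} (S : Finset ℕ) {j : Fin n}
    (h : #(blockRows R ((R.1 j : ℕ) / 2)) ≠ 1) : flipCol R S j = R.1 j := by
  rw [flipCol, if_neg (by tauto)]

lemma flipCol_injective (R : RookPlacement n) (S : Finset ℕ) :
    Function.Injective (flipCol R S) := by
  intro j k h
  have hblock : (R.1 k : ℕ) / 2 = (R.1 j : ℕ) / 2 := by
    rw [← flipCol_div_two R S j, ← flipCol_div_two R S k, h]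
  by_cases hj : #(blockRows R ((R.1 j : ℕ) / 2)) = 1
  · exact eq_of_card_blockRows_eq_one hj rfl hblock
  · rw [flipCol_of_not_single S hj, flipCol_of_not_single S (hblock ▸ hj)] at h
    exact R.2.1 (Fin.ext h)

def flipSingles (R : RookPlacement n) (S : Finset ℕ) : RookPlacement n :=
  ⟨fun j => ⟨flipCol R S j, by
      have := R.2.2 j
      have := flipCol_div_two R S j
      omega⟩,
   fun j k h => flipCol_injective R S (congrArg Fin.val h),
   fun j => by
     have := R.2.2 j
     have := flipCol_div_two R S j
     dsimp only
     omega⟩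

lemma flipSingles_apply (R : RookPlacement n) (S : Finset ℕ) (j : Fin n) :
    ((flipSingles R S).1 j : ℕ) = flipCol R S j := rfl

@[simp]
lemma blockRows_flipSingles (R : RookPlacement n) (S : Finset ℕ) :
    blockRows (flipSingles R S) = blockRows R := by
  ext b j
  simp [blockRows, flipSingles_apply, flipCol_div_two]

lemma singles_flipSingles (R : RookPlacement n) (S : Finset ℕ) :
    singles (flipSingles R S) = singles R := by
  simp [singles]

lemma doubleBlocks_flipSingles (R : RookPlacement n) (S : Finset ℕ) :
    doubleBlocks (flipSingles R S) = doubleBlocks R := by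
  simp [doubleBlocks]

lemma flipSingles_flipSingles (R : RookPlacement n) (S : Finset ℕ) :
    flipSingles (flipSingles R S) S = R := by
  ext j
  rw [flipSingles_apply, flipCol, blockRows_flipSingles, flipSingles_apply, flipCol_div_two]
  unfold flipCol
  split_ifs <;> omega

lemma _root_.LeftAligned.occupied_of_mem_singles {T : RookPlacement n} (hT : LeftAligned T)
    {b : ℕ} (hb : b ∈ singles T) : Occupied T (2 * b) ∧ ¬ Occupied T (2 * b + 1) := by
  simp only [singles, mem_filter, mem_range] at hb
  have hcard := card_blockRows T b
  have hleft := hT ⟨b, hb.1⟩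
  split_ifs at hcard <;> simp_all

lemma rightSingles_flipSingles {T : RookPlacement n} (hT : LeftAligned T) {S : Finset ℕ}
    (hS : S ⊆ singles T) : rightSingles (flipSingles T S) = S := by
  ext b
  simp only [rightSingles, singles_flipSingles, mem_filter]
  by_cases hb : b ∈ singles T
  swap
  · exact ⟨fun h => absurd h.1 hb, fun h => absurd (hS h) hb⟩
  obtain ⟨⟨j, hj⟩, hright⟩ := hT.occupied_of_mem_singles hb
  have hsingle : #(blockRows T b) = 1 := (mem_filter.mp hb).2
  simp only [hb, true_and]
  constructor
  · rintro ⟨k, hk⟩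
    rw [flipSingles_apply] at hk
    have hkb : (T.1 k : ℕ) / 2 = b := by rw [← flipCol_div_two T S k, hk]; omega
    by_contra hbS
    rw [flipCol, if_neg (by rw [hkb]; tauto)] at hk
    exact hright ⟨k, hk⟩
  · intro hbS
    refine ⟨j, ?_⟩
    rw [flipSingles_apply, flipCol, if_pos (by rw [hj]; simp [hbS, hsingle])]
    omega

lemma leftAligned_flipSingles_rightSingles (R : RookPlacement n) :
    LeftAligned (flipSingles R (rightSingles R)) := by
  rintro ⟨b, hbn⟩ ⟨j, hj⟩
  simp only [flipSingles_apply] at hj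
  have hjb : (R.1 j : ℕ) / 2 = b := by rw [← flipCol_div_two R _ j, hj]; omega
  have hcard := card_blockRows R b
  by_cases hflip : b ∈ rightSingles R ∧ #(blockRows R b) = 1
  · rw [flipCol, if_pos (by rwa [hjb])] at hj
    have hleft : Occupied R (2 * b) := ⟨j, by omega⟩
    have hright : Occupied R (2 * b + 1) := (mem_filter.mp hflip.1).2
    simp [hleft, hright, hflip.2] at hcard
  · rw [flipCol, if_neg (by rwa [hjb])] at hj
    have hright : Occupied R (2 * b + 1) := ⟨j, hj⟩
    have hnot : #(blockRows R b) ≠ 1 := fun h =>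
      hflip ⟨mem_filter.mpr ⟨mem_filter.mpr ⟨mem_range.mpr hbn, h⟩, hright⟩, h⟩
    obtain ⟨k, hk⟩ : Occupied R (2 * b) := by
      by_contra hleft
      simp [hleft, hright] at hcard
      exact hnot hcard
    have hkb : (R.1 k : ℕ) / 2 = b := by omega
    exact ⟨k, by rw [flipSingles_apply, flipCol_of_not_single _ (by rwa [hkb]), hk]⟩

theorem sum_pow_oddRooks {M : Type*} [CommSemiring M] (u : M) :
    ∑ R : RookPlacement n, u ^ oddRooks R =
      ∑ T : {T : RookPlacement n // LeftAligned T}, u ^ doubleBlocks T.1 * (u + 1) ^ bor T.1 := by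
  have hpowerset : ∀ T : RookPlacement n, (u + 1) ^ bor T = ∑ S ∈ (singles T).powerset, u ^ #S :=
    fun T => by simp [← card_singles, ← sum_pow_mul_eq_add_pow]
  simp_rw [hpowerset, mul_sum, ← pow_add]
  rw [sum_sigma']
  refine sum_bij'
    (fun R _ => ⟨⟨flipSingles R (rightSingles R), leftAligned_flipSingles_rightSingles R⟩,
      rightSingles R⟩)
    (fun x _ => flipSingles x.1.1 x.2) (fun R _ => ?_) (fun _ _ => mem_univ _)
    (fun R _ => flipSingles_flipSingles R _) (fun x hx => ?_)
    (fun R _ => by rw [oddRooks_eq, doubleBlocks_flipSingles])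
  · rw [mem_sigma, mem_powerset, singles_flipSingles]
    exact ⟨mem_univ _, filter_subset _ _⟩
  · have hS := rightSingles_flipSingles x.1.2 (mem_powerset.mp (mem_sigma.mp hx).2)
    exact Sigma.ext (Subtype.ext (by simp only [hS, flipSingles_flipSingles])) (heq_of_eq hS)

end RookPlacement

open RookPlacement

theorem sum_pow_desCount_eq_sum_leftAligned {M : Type*} [CommSemiring M] (n : ℕ) (u : M) :
    ∑ σ : Perm (Fin (n + 1)), u ^ desCount σ =
      ∑ T : {T : RookPlacement n // LeftAligned T}, u ^ doubleBlocks T.1 * (u + 1) ^ bor T.1 := by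
  rw [← sum_oddRooks_eq_sum_desCount, sum_pow_oddRooks]

lemma sum_leftAligned_eq_sum_range {M : Type*} [CommSemiring M] (n : ℕ) (u : M) :
    ∑ T : {T : RookPlacement n // LeftAligned T}, u ^ doubleBlocks T.1 * (u + 1) ^ bor T.1 =
      ∑ k ∈ range (n / 2 + 1),
        (Nat.card {R : RookPlacement n // LeftAligned R ∧ bor R = n - 2 * k} : M) *
          u ^ k * (u + 1) ^ (n - 2 * k) := by
  rw [← sum_fiberwise_of_maps_to (g := fun T => doubleBlocks T.1) (t := range (n / 2 + 1))
    fun T _ => by have := two_mul_doubleBlocks_add_bor T.1; simp only [mem_range]; omega]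
  refine sum_congr rfl fun k hk => ?_
  have hk : 2 * k ≤ n := by simp only [mem_range] at hk; omega
  have hcard : #{T : {T : RookPlacement n // LeftAligned T} | doubleBlocks T.1 = k} =
      Nat.card {R : RookPlacement n // LeftAligned R ∧ bor R = n - 2 * k} := by
    rw [← Fintype.card_subtype, ← Nat.card_eq_fintype_card]
    refine Nat.card_congr ((Equiv.subtypeSubtypeEquivSubtypeInter LeftAligned
      fun R => doubleBlocks R = k).trans
      (Equiv.subtypeEquivRight fun R => and_congr_right fun _ => ?_))
    have := two_mul_doubleBlocks_add_bor R
    omega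
  rw [sum_congr rfl (g := fun _ => u ^ k * (u + 1) ^ (n - 2 * k)) fun T hT => by
      rw [← (mem_filter.mp hT).2, ← bor_eq_sub],
    sum_const, hcard, nsmul_eq_mul, mul_assoc]

lemma rpow_div_two_mul_div_sqrt_pow {x : ℝ} (hx : 0 < x) (y : ℝ) {a b n : ℕ}
    (h : 2 * a + b = n) : x ^ ((n : ℝ) / 2) * (y / √x) ^ b = x ^ a * y ^ b := by
  have hsqrt : x ^ ((n : ℝ) / 2) = √x ^ n := by
    rw [Real.sqrt_eq_rpow, ← Real.rpow_natCast, ← Real.rpow_mul hx.le]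
    ring_nf
  have hsqrt_pos : 0 < √x := Real.sqrt_pos.mpr hx
  rw [hsqrt, ← h, pow_add, pow_mul, Real.sq_sqrt hx.le, div_pow]
  field_simp

open Polynomial in
/-- With `p_n(x) = Σ_T x^{bor T}` (sum over left-aligned rook placements `T`
on `2δ_n`) and `S_{n+1}(x) = Σ_{σ ∈ S_{n+1}} x^{des σ}` the `(n+1)`-st
Eulerian polynomial, one has `x^{n/2} · p_n((x+1)/√x) = S_{n+1}(x)`;
equivalently, writing `p_n(x) = Σ_k a_{n,k} x^{n-2k}` where `a_{n,k}` is the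
number of left-aligned rook placements with `bor = n - 2k`,
`S_{n+1}(x) = Σ_k a_{n,k} x^k (x+1)^{n-2k}`. -/
theorem eulerian_eq_left_aligned_gamma_expansion (n : ℕ) :
    (∀ x : ℝ, 0 < x →
      x ^ ((n : ℝ) / 2) *
          (∑ R : {R : RookPlacement n // LeftAligned R},
            ((x + 1) / Real.sqrt x) ^ bor R.1) =
        ∑ σ : Equiv.Perm (Fin (n + 1)), x ^ desCount σ) ∧
    (∑ σ : Equiv.Perm (Fin (n + 1)), (X : Polynomial ℤ) ^ desCount σ) =
      ∑ k ∈ Finset.range (n / 2 + 1),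
        Polynomial.C
            ((Nat.card {R : RookPlacement n // LeftAligned R ∧ bor R = n - 2 * k} : ℤ)) *
          X ^ k * (X + 1) ^ (n - 2 * k) := by
  refine ⟨fun x hx => ?_, ?_⟩
  · rw [sum_pow_desCount_eq_sum_leftAligned, mul_sum]
    exact sum_congr rfl fun T _ =>
      rpow_div_two_mul_div_sqrt_pow hx _ (two_mul_doubleBlocks_add_bor T.1)
  · rw [sum_pow_desCount_eq_sum_leftAligned, sum_leftAligned_eq_sum_range]
    simp only [map_natCast]
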